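/- Let g be a Lie algebra and m, h ⊆ g complementary subspaces (g = m ⊕ h as vector spaces). Define φ: m⊗m→m and θ: m⊗m→h by the decomposition [ξ,ξ'] = φ(ξ,ξ') + θ(ξ,ξ'), varφ: h⊗m→m and ψ: h⊗m→h by [Z,ξ] = varφ(Z,ξ) + ψ(Z,ξ), and γ: h⊗h→m, μ: h⊗h→h by [Z,Z'] = γ(Z,Z') + μ(Z,Z'). Then these six maps satisfy the compatibility conditions of a bicocycle matched pair, and g is isomorphic as a Lie algebra to the bicocycle double cross sum m _γ⋈_θ h. -/
import Mathlib


/-- The compatibility conditions making `(m, h)` a bicocycle matched pair. -/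
def BicocycleMatchedPair
    {k : Type*} [Field k] {m h : Type*}
    [AddCommGroup m] [Module k m] [AddCommGroup h] [Module k h]
    (phi : m →ₗ[k] m →ₗ[k] m) (th : m →ₗ[k] m →ₗ[k] h)
    (mu : h →ₗ[k] h →ₗ[k] h) (gam : h →ₗ[k] h →ₗ[k] m)
    (vphi : h →ₗ[k] m →ₗ[k] m) (psi : h →ₗ[k] m →ₗ[k] h) : Prop :=
  -- (1) vanishing on diagonal pairs
  (∀ ξ : m, phi ξ ξ = 0) ∧ (∀ ξ : m, th ξ ξ = 0) ∧
  (∀ Z : h, gam Z Z = 0) ∧ (∀ Z : h, mu Z Z = 0) ∧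
  -- (2)
  (∀ (Z : h) (ξ ξ' : m), vphi Z (phi ξ ξ') =
    phi (vphi Z ξ) ξ' + phi ξ (vphi Z ξ') + vphi (psi Z ξ) ξ'
      - vphi (psi Z ξ') ξ + gam (th ξ ξ') Z) ∧
  -- (3)
  (∀ (Z : h) (ξ ξ' : m), mu Z (th ξ ξ') =
    th (vphi Z ξ) ξ' + th ξ (vphi Z ξ') + psi (psi Z ξ) ξ'
      - psi (psi Z ξ') ξ - psi Z (phi ξ ξ')) ∧
  -- (4)
  (∀ (Z Z' : h) (ξ : m), vphi (mu Z Z') ξ =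
    vphi Z (vphi Z' ξ) - vphi Z' (vphi Z ξ) + gam (psi Z ξ) Z'
      + gam Z (psi Z' ξ) - phi (gam Z Z') ξ) ∧
  -- (5)
  (∀ (Z Z' : h) (ξ : m), psi (mu Z Z') ξ =
    mu Z (psi Z' ξ) + mu (psi Z ξ) Z' + psi Z (vphi Z' ξ)
      - psi Z' (vphi Z ξ) - th (gam Z Z') ξ) ∧
  -- (6)
  (∀ ξ ξ' ξ'' : m,
    phi (phi ξ ξ') ξ'' + phi (phi ξ' ξ'') ξ + phi (phi ξ'' ξ) ξ'
      + vphi (th ξ ξ') ξ'' + vphi (th ξ' ξ'') ξ + vphi (th ξ'' ξ) ξ' = 0) ∧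
  -- (7)
  (∀ ξ ξ' ξ'' : m,
    psi (th ξ ξ') ξ'' + psi (th ξ' ξ'') ξ + psi (th ξ'' ξ) ξ'
      + th (phi ξ ξ') ξ'' + th (phi ξ' ξ'') ξ + th (phi ξ'' ξ) ξ' = 0) ∧
  -- (8)
  (∀ Z Z' Z'' : h,
    gam (mu Z Z') Z'' + gam (mu Z' Z'') Z + gam (mu Z'' Z) Z'
      - (vphi Z (gam Z' Z'') + vphi Z' (gam Z'' Z) + vphi Z'' (gam Z Z')) = 0) ∧
  -- (9)
  (∀ Z Z' Z'' : h,
    mu (mu Z Z') Z'' + mu (mu Z' Z'') Z + mu (mu Z'' Z) Z'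
      - (psi Z (gam Z' Z'') + psi Z' (gam Z'' Z) + psi Z'' (gam Z Z')) = 0)

/-- Any Lie algebra `g` with two complementary subspaces `m, h ⊆ g` is
isomorphic, as a Lie algebra, to the bicocycle double cross sum of these subspaces:
the six structure maps recovered from the bracket of `g` satisfy the compatibility
conditions of a bicocycle matched pair, and the addition map `m × h → g` is a
bijection intertwining the bicocycle double cross sum bracket with the bracket of `g`. -/
theorem lie_algebra_is_bicocycle_double_cross_sum
    (k : Type*) [Field k] (g : Type*) [LieRing g] [LieAlgebra k g]
    (m h : Submodule k g) (hcompl : IsCompl m h)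
    (phi : m →ₗ[k] m →ₗ[k] m) (th : m →ₗ[k] m →ₗ[k] h)
    (mu : h →ₗ[k] h →ₗ[k] h) (gam : h →ₗ[k] h →ₗ[k] m)
    (vphi : h →ₗ[k] m →ₗ[k] m) (psi : h →ₗ[k] m →ₗ[k] h)
    (hmm : ∀ ξ ξ' : m, ⁅(ξ : g), (ξ' : g)⁆ = (phi ξ ξ' : g) + (th ξ ξ' : g))
    (hhm : ∀ (Z : h) (ξ : m), ⁅(Z : g), (ξ : g)⁆ = (vphi Z ξ : g) + (psi Z ξ : g))
    (hhh : ∀ Z Z' : h, ⁅(Z : g), (Z' : g)⁆ = (gam Z Z' : g) + (mu Z Z' : g))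
    (B : (m × h) → (m × h) → (m × h))
    (hB : ∀ p q : m × h, B p q =
      (phi p.1 q.1 + vphi p.2 q.1 - vphi q.2 p.1 + gam p.2 q.2,
       mu p.2 q.2 + psi p.2 q.1 - psi q.2 p.1 + th p.1 q.1)) :
    BicocycleMatchedPair phi th mu gam vphi psi ∧
    Function.Bijective (fun p : m × h => (p.1 : g) + (p.2 : g)) ∧
    (∀ p q : m × h,
      ((B p q).1 : g) + ((B p q).2 : g) =
        ⁅(p.1 : g) + (p.2 : g), (q.1 : g) + (q.2 : g)⁆) := by
  -- Key: a sum of an element of m and an element of h is zero iff both are zero.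
  have key : ∀ (a : m) (c : h), (a : g) + (c : g) = 0 → a = 0 ∧ c = 0 := by
    intro a c hac
    have hah : (a : g) ∈ h := by
      have hac' : (a : g) = -(c : g) := eq_neg_of_add_eq_zero_left hac
      rw [hac']; exact neg_mem c.2
    have ha0 : (a : g) = 0 := Submodule.disjoint_def.mp hcompl.disjoint _ a.2 hah
    refine ⟨Subtype.ext ha0, Subtype.ext ?_⟩
    rw [ha0, zero_add] at hac
    exact hac
  have comp : ∀ (a b : m) (c d : h), ((a : g) + (c : g) = (b : g) + (d : g)) → a = b ∧ c = d := by
    intro a b c d hEq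
    have h0 : ((a - b : m) : g) + ((c - d : h) : g) = 0 := by
      push_cast
      rw [sub_add_sub_comm, hEq, sub_self]
    obtain ⟨h1, h2⟩ := key _ _ h0
    exact ⟨sub_eq_zero.mp h1, sub_eq_zero.mp h2⟩
  -- diagonal vanishing
  have hdiagm : ∀ ξ : m, phi ξ ξ = 0 ∧ th ξ ξ = 0 := by
    intro ξ
    refine key _ _ ?_
    rw [← hmm]; exact lie_self _
  have hdiagh : ∀ Z : h, gam Z Z = 0 ∧ mu Z Z = 0 := by
    intro Z
    refine key _ _ ?_
    rw [← hhh]; exact lie_self _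
  -- skew-symmetry of gam and mu
  have hskew : ∀ Z Z' : h, gam Z Z' = - gam Z' Z ∧ mu Z Z' = - mu Z' Z := by
    intro Z Z'
    have e : ⁅(Z : g), (Z' : g)⁆ + ⁅(Z' : g), (Z : g)⁆ = 0 := by
      rw [← lie_skew (Z : g) (Z' : g)]; abel
    rw [hhh, hhh] at e
    have h0 : ((gam Z Z' + gam Z' Z : m) : g) + ((mu Z Z' + mu Z' Z : h) : g) = 0 := by
      push_cast
      rw [← e]; abel
    obtain ⟨h1, h2⟩ := key _ _ h0
    exact ⟨eq_neg_of_add_eq_zero_left h1, eq_neg_of_add_eq_zero_left h2⟩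
  -- Jacobi with (h, m, m)
  have jac1 : ∀ (Z : h) (ξ ξ' : m),
      (vphi Z (phi ξ ξ') + gam Z (th ξ ξ')
        - phi (vphi Z ξ) ξ' - vphi (psi Z ξ) ξ' - phi ξ (vphi Z ξ') + vphi (psi Z ξ') ξ = 0)
      ∧ (psi Z (phi ξ ξ') + mu Z (th ξ ξ')
        - th (vphi Z ξ) ξ' - psi (psi Z ξ) ξ' - th ξ (vphi Z ξ') + psi (psi Z ξ') ξ = 0) := by
    intro Z ξ ξ'
    have e1 : ⁅(Z : g), ⁅(ξ : g), (ξ' : g)⁆⁆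
        = (vphi Z (phi ξ ξ') : g) + (psi Z (phi ξ ξ') : g)
          + (gam Z (th ξ ξ') : g) + (mu Z (th ξ ξ') : g) := by
      rw [hmm, lie_add, hhm, hhh]; abel
    have e2 : ⁅⁅(Z : g), (ξ : g)⁆, (ξ' : g)⁆
        = (phi (vphi Z ξ) ξ' : g) + (th (vphi Z ξ) ξ' : g)
          + (vphi (psi Z ξ) ξ' : g) + (psi (psi Z ξ) ξ' : g) := by
      rw [hhm, add_lie, hmm, hhm]; abel
    have e3 : ⁅(ξ : g), ⁅(Z : g), (ξ' : g)⁆⁆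
        = (phi ξ (vphi Z ξ') : g) + (th ξ (vphi Z ξ') : g)
          - (vphi (psi Z ξ') ξ : g) - (psi (psi Z ξ') ξ : g) := by
      rw [hhm Z ξ', lie_add, hmm, ← lie_skew ((ξ : g)) ((psi Z ξ' : h) : g), hhm]
      abel
    have e0 : ⁅(Z : g), ⁅(ξ : g), (ξ' : g)⁆⁆ - ⁅⁅(Z : g), (ξ : g)⁆, (ξ' : g)⁆
        - ⁅(ξ : g), ⁅(Z : g), (ξ' : g)⁆⁆ = 0 := by
      rw [leibniz_lie]; abel
    rw [e1, e2, e3] at e0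
    refine key _ _ ?_
    push_cast
    rw [← e0]; abel
  -- Jacobi with (h, h, m)
  have jac2 : ∀ (Z Z' : h) (ξ : m),
      (phi (gam Z Z') ξ + vphi (mu Z Z') ξ - vphi Z (vphi Z' ξ) - gam Z (psi Z' ξ)
        + vphi Z' (vphi Z ξ) + gam Z' (psi Z ξ) = 0)
      ∧ (th (gam Z Z') ξ + psi (mu Z Z') ξ - psi Z (vphi Z' ξ) - mu Z (psi Z' ξ)
        + psi Z' (vphi Z ξ) + mu Z' (psi Z ξ) = 0) := by
    intro Z Z' ξ
    have e1 : ⁅⁅(Z : g), (Z' : g)⁆, (ξ : g)⁆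
        = (phi (gam Z Z') ξ : g) + (th (gam Z Z') ξ : g)
          + (vphi (mu Z Z') ξ : g) + (psi (mu Z Z') ξ : g) := by
      rw [hhh, add_lie, hmm, hhm]; abel
    have e2 : ⁅(Z : g), ⁅(Z' : g), (ξ : g)⁆⁆
        = (vphi Z (vphi Z' ξ) : g) + (psi Z (vphi Z' ξ) : g)
          + (gam Z (psi Z' ξ) : g) + (mu Z (psi Z' ξ) : g) := by
      rw [hhm Z' ξ, lie_add, hhm, hhh]; abel
    have e3 : ⁅(Z' : g), ⁅(Z : g), (ξ : g)⁆⁆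
        = (vphi Z' (vphi Z ξ) : g) + (psi Z' (vphi Z ξ) : g)
          + (gam Z' (psi Z ξ) : g) + (mu Z' (psi Z ξ) : g) := by
      rw [hhm Z ξ, lie_add, hhm, hhh]; abel
    have e0 : ⁅⁅(Z : g), (Z' : g)⁆, (ξ : g)⁆ - ⁅(Z : g), ⁅(Z' : g), (ξ : g)⁆⁆
        + ⁅(Z' : g), ⁅(Z : g), (ξ : g)⁆⁆ = 0 := by
      rw [lie_lie]; abel
    rw [e1, e2, e3] at e0
    refine key _ _ ?_
    push_cast
    rw [← e0]; abel
  -- Jacobi with (m, m, m)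
  have jac3 : ∀ ξ ξ' ξ'' : m,
      (phi (phi ξ ξ') ξ'' + vphi (th ξ ξ') ξ'' + phi (phi ξ' ξ'') ξ + vphi (th ξ' ξ'') ξ
        + phi (phi ξ'' ξ) ξ' + vphi (th ξ'' ξ) ξ' = 0)
      ∧ (th (phi ξ ξ') ξ'' + psi (th ξ ξ') ξ'' + th (phi ξ' ξ'') ξ + psi (th ξ' ξ'') ξ
        + th (phi ξ'' ξ) ξ' + psi (th ξ'' ξ) ξ' = 0) := by
    intro ξ ξ' ξ''
    have ee : ∀ a b c : m, ⁅⁅(a : g), (b : g)⁆, (c : g)⁆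
        = (phi (phi a b) c : g) + (th (phi a b) c : g)
          + (vphi (th a b) c : g) + (psi (th a b) c : g) := by
      intro a b c
      rw [hmm a b, add_lie, hmm, hhm]; abel
    have e0 : ⁅⁅(ξ : g), (ξ' : g)⁆, (ξ'' : g)⁆ + ⁅⁅(ξ' : g), (ξ'' : g)⁆, (ξ : g)⁆
        + ⁅⁅(ξ'' : g), (ξ : g)⁆, (ξ' : g)⁆ = 0 := by
      have h1 : -(⁅(ξ : g), ⁅(ξ' : g), (ξ'' : g)⁆⁆ + ⁅(ξ' : g), ⁅(ξ'' : g), (ξ : g)⁆⁆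
          + ⁅(ξ'' : g), ⁅(ξ : g), (ξ' : g)⁆⁆) = 0 := by rw [lie_jacobi]; simp
      rw [← lie_skew ⁅(ξ : g), (ξ' : g)⁆ (ξ'' : g), ← lie_skew ⁅(ξ' : g), (ξ'' : g)⁆ (ξ : g),
        ← lie_skew ⁅(ξ'' : g), (ξ : g)⁆ (ξ' : g), ← h1]
      abel
    rw [ee ξ ξ' ξ'', ee ξ' ξ'' ξ, ee ξ'' ξ ξ'] at e0
    refine key _ _ ?_
    push_cast
    rw [← e0]; abel
  -- Jacobi with (h, h, h)
  have jac4 : ∀ Z Z' Z'' : h,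
      (gam (mu Z Z') Z'' - vphi Z'' (gam Z Z') + gam (mu Z' Z'') Z - vphi Z (gam Z' Z'')
        + gam (mu Z'' Z) Z' - vphi Z' (gam Z'' Z) = 0)
      ∧ (mu (mu Z Z') Z'' - psi Z'' (gam Z Z') + mu (mu Z' Z'') Z - psi Z (gam Z' Z'')
        + mu (mu Z'' Z) Z' - psi Z' (gam Z'' Z) = 0) := by
    intro Z Z' Z''
    have ee : ∀ a b c : h, ⁅⁅(a : g), (b : g)⁆, (c : g)⁆
        = -(vphi c (gam a b) : g) - (psi c (gam a b) : g)
          + (gam (mu a b) c : g) + (mu (mu a b) c : g) := by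
      intro a b c
      rw [hhh a b, add_lie, ← lie_skew ((gam a b : m) : g) ((c : h) : g), hhm, hhh]
      abel
    have e0 : ⁅⁅(Z : g), (Z' : g)⁆, (Z'' : g)⁆ + ⁅⁅(Z' : g), (Z'' : g)⁆, (Z : g)⁆
        + ⁅⁅(Z'' : g), (Z : g)⁆, (Z' : g)⁆ = 0 := by
      have h1 : -(⁅(Z : g), ⁅(Z' : g), (Z'' : g)⁆⁆ + ⁅(Z' : g), ⁅(Z'' : g), (Z : g)⁆⁆
          + ⁅(Z'' : g), ⁅(Z : g), (Z' : g)⁆⁆) = 0 := by rw [lie_jacobi]; simp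
      rw [← lie_skew ⁅(Z : g), (Z' : g)⁆ (Z'' : g), ← lie_skew ⁅(Z' : g), (Z'' : g)⁆ (Z : g),
        ← lie_skew ⁅(Z'' : g), (Z : g)⁆ (Z' : g), ← h1]
      abel
    rw [ee Z Z' Z'', ee Z' Z'' Z, ee Z'' Z Z'] at e0
    refine key _ _ ?_
    push_cast
    rw [← e0]; abel
  refine ⟨⟨fun ξ => (hdiagm ξ).1, fun ξ => (hdiagm ξ).2,
    fun Z => (hdiagh Z).1, fun Z => (hdiagh Z).2, ?_, ?_, ?_, ?_, ?_, ?_, ?_, ?_⟩, ⟨?_, ?_⟩, ?_⟩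
  · -- (2)
    intro Z ξ ξ'
    rw [(hskew (th ξ ξ') Z).1, ← sub_eq_zero, ← (jac1 Z ξ ξ').1]
    abel
  · -- (3)
    intro Z ξ ξ'
    rw [← sub_eq_zero, ← (jac1 Z ξ ξ').2]
    abel
  · -- (4)
    intro Z Z' ξ
    rw [(hskew (psi Z ξ) Z').1, ← sub_eq_zero, ← (jac2 Z Z' ξ).1]
    abel
  · -- (5)
    intro Z Z' ξ
    rw [(hskew (psi Z ξ) Z').2, ← sub_eq_zero, ← (jac2 Z Z' ξ).2]
    abel
  · -- (6)
    intro ξ ξ' ξ''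
    rw [← (jac3 ξ ξ' ξ'').1]
    abel
  · -- (7)
    intro ξ ξ' ξ''
    rw [← (jac3 ξ ξ' ξ'').2]
    abel
  · -- (8)
    intro Z Z' Z''
    rw [← (jac4 Z Z' Z'').1]
    abel
  · -- (9)
    intro Z Z' Z''
    rw [← (jac4 Z Z' Z'').2]
    abel
  · -- injective
    intro p q hpq
    obtain ⟨h1, h2⟩ := comp p.1 q.1 p.2 q.2 hpq
    exact Prod.ext h1 h2
  · -- surjective
    intro x
    have hx : x ∈ m ⊔ h := by rw [hcompl.sup_eq_top]; trivial
    obtain ⟨a, ha, c, hc, hac⟩ := Submodule.mem_sup.mp hx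
    exact ⟨(⟨a, ha⟩, ⟨c, hc⟩), hac⟩
  · -- bracket formula
    intro p q
    rw [hB]
    have e : ⁅(p.1 : g) + (p.2 : g), (q.1 : g) + (q.2 : g)⁆
        = ⁅(p.1 : g), (q.1 : g)⁆ + ⁅(p.2 : g), (q.1 : g)⁆
          - ⁅(q.2 : g), (p.1 : g)⁆ + ⁅(p.2 : g), (q.2 : g)⁆ := by
      rw [add_lie, lie_add, lie_add, ← lie_skew ((p.1 : m) : g) ((q.2 : h) : g)]
      abel
    rw [e, hmm, hhm, hhm, hhh]
    push_cast
    abel
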